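/- arXiv:1801.00343 — 4 statements merged into one kernel-verified Lean document; each statement's English description precedes it below -/
import Mathlib

section
/- For every real number α > -1, the ideal I_α = {A ⊆ ℕ : ∑_{i ∈ A, i ≤ n} i^α = o(∑_{i ≤ n} i^α) as n → ∞} coincides with the ideal I_0 of natural density zero sets. -/
open Filter Topology Set MeasureTheory
open scoped ENNReal

noncomputable section

/-- An ideal on ℕ: contains all finite sets, closed under subsets and finite
unions, and does not contain ℕ itself. -/
def IsIdealOn (I : Set (Set ℕ)) : Prop :=
  (∀ ⦃A B : Set ℕ⦄, A ⊆ B → B ∈ I → A ∈ I) ∧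
  (∀ ⦃A B : Set ℕ⦄, A ∈ I → B ∈ I → A ∪ B ∈ I) ∧
  (∀ A : Set ℕ, A.Finite → A ∈ I) ∧
  (Set.univ : Set ℕ) ∉ I

/-- `l` is an `I`-cluster point of the sequence `x`. -/
def IdealClusterPt {X : Type*} [TopologicalSpace X] (I : Set (Set ℕ)) (x : ℕ → X) (l : X) : Prop :=
  ∀ U ∈ 𝓝 l, {n | x n ∈ U} ∉ I

/-- `l` is an `I`-limit point of the sequence `x`. -/
def IdealLimitPt {X : Type*} [TopologicalSpace X] (I : Set (Set ℕ)) (x : ℕ → X) (l : X) : Prop :=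
  ∃ k : ℕ → ℕ, StrictMono k ∧ Tendsto (x ∘ k) atTop (𝓝 l) ∧ Set.range k ∉ I

/-- Ordinary limit points of a sequence. -/
def limitPts {X : Type*} [TopologicalSpace X] (x : ℕ → X) : Set X :=
  {l | ∃ k : ℕ → ℕ, StrictMono k ∧ Tendsto (x ∘ k) atTop (𝓝 l)}

/-- The `i`-th digit (0-indexed; representing `d_{i+1}`) of the non-terminating
dyadic expansion of `ω ∈ (0,1]`. -/
def dyadicDigit (ω : ℝ) (i : ℕ) : ℤ :=
  ⌈(2:ℝ) ^ (i + 1) * ω⌉ - 2 * ⌈(2:ℝ) ^ i * ω⌉ + 1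

/-- The subsequence `x↾ω` of `x` keeping `x i` iff the dyadic digit of `ω` at `i` is `1`. -/
def subseq {X : Type*} (x : ℕ → X) (ω : ℝ) : ℕ → X :=
  fun k => x (Nat.nth (fun i => dyadicDigit ω i = 1) k)

open Classical in
/-- Characteristic-function embedding of `P(ℕ)` into Cantor space. -/
def chi (A : Set ℕ) : ℕ → Bool := fun n => if n ∈ A then true else false

def IsFsigma {α : Type*} [TopologicalSpace α] (s : Set α) : Prop :=
  ∃ F : ℕ → Set α, (∀ n, IsClosed (F n)) ∧ s = ⋃ n, F n

def IsFsigmaDelta {α : Type*} [TopologicalSpace α] (s : Set α) : Prop :=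
  ∃ F : ℕ → Set α, (∀ n, IsFsigma (F n)) ∧ s = ⋂ n, F n

/-- `I` is `F_σ`-separated from its dual filter. -/
def FsigmaSeparated (I : Set (Set ℕ)) : Prop :=
  ∃ A : Set (ℕ → Bool), IsFsigma A ∧ chi '' I ⊆ A ∧ A ∩ chi '' {S : Set ℕ | Sᶜ ∈ I} = ∅

/-- A submeasure on ℕ. -/
def IsSubmeasureOn (φ : Set ℕ → ℝ≥0∞) : Prop :=
  φ ∅ = 0 ∧ (∀ ⦃A B : Set ℕ⦄, A ⊆ B → φ A ≤ φ B) ∧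
    (∀ A B : Set ℕ, φ (A ∪ B) ≤ φ A + φ B) ∧ ∀ n : ℕ, φ {n} ≠ ⊤

/-- A partition of ℕ into nonempty finite sets. -/
def IsFinPartition (P : ℕ → Set ℕ) : Prop :=
  (∀ n, (P n).Finite ∧ (P n).Nonempty) ∧ (⋃ n, P n) = Set.univ ∧
    Pairwise (Function.onFun Disjoint P)

/-- The generalized density ideal determined by `(P n)` and `(μ n)`. -/
def Zmu (P : ℕ → Set ℕ) (μ : ℕ → Set ℕ → ℝ≥0∞) : Set (Set ℕ) :=
  {A | Tendsto (fun n => μ n (A ∩ P n)) atTop (𝓝 0)}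

def IsGenDensityIdeal (I : Set (Set ℕ)) : Prop :=
  ∃ (P : ℕ → Set ℕ) (μ : ℕ → Set ℕ → ℝ≥0∞), IsFinPartition P ∧
    (∀ n, IsSubmeasureOn (μ n)) ∧ (∀ n A, μ n A = μ n (A ∩ P n)) ∧
    Filter.limsup (fun n => μ n (P n)) atTop ≠ 0 ∧ I = Zmu P μ

/-- Exhaustive ideal of a submeasure. -/
def Exh (φ : Set ℕ → ℝ≥0∞) : Set (Set ℕ) :=
  {A | Tendsto (fun n => φ (A \ Set.Iio n)) atTop (𝓝 0)}

open Classical in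
/-- The ideal `I_α`. -/
def Ialpha (α : ℝ) : Set (Set ℕ) :=
  {A | (fun n => ∑ i ∈ Finset.Icc 1 n, if i ∈ A then (i:ℝ) ^ α else 0)
      =o[atTop] (fun n => ∑ i ∈ Finset.Icc 1 n, (i:ℝ) ^ α)}

open Classical in
/-- The ideal of natural density zero sets. -/
def densityZero : Set (Set ℕ) :=
  {A | Tendsto (fun n : ℕ => (∑ i ∈ Finset.range n, if i ∈ A then (1:ℝ) else 0) / n)
      atTop (𝓝 0)}

open Classical in
def phiEU (f : ℕ → ℝ) (A : Set ℕ) : ℝ :=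
  ⨆ n : ℕ, (∑ i ∈ Finset.Icc 1 n, if i ∈ A then f i else 0) / (∑ i ∈ Finset.Icc 1 n, f i)

def ExhReal (φ : Set ℕ → ℝ) : Set (Set ℕ) :=
  {A | Tendsto (fun n => φ (A \ Set.Iio n)) atTop (𝓝 0)}

def IsErdosUlamIdeal (I : Set (Set ℕ)) : Prop :=
  ∃ f : ℕ → ℝ, (∀ n, 0 < f n) ∧
    Tendsto (fun n => ∑ i ∈ Finset.Icc 1 n, f i) atTop atTop ∧
    (fun n => f n) =o[atTop] (fun n => ∑ i ∈ Finset.Icc 1 n, f i) ∧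
    I = ExhReal (phiEU f)

end

/-!
Write `c(n)` for the number of elements of `A ∩ [1, n]` and `S(n)` for the sum of `i ^ α` over
them. Comparing with `∫ x ^ α` gives `∑_{i ≤ n} i ^ α ≍ n ^ (α + 1)`, so `A ∈ I_α` means
`S(n) = o(n ^ (α + 1))`. The set of `c(n)` positive integers of least (resp. greatest) weight
`i ^ α` is `[1, c(n)]` when `α ≥ 0` (resp. `α ≤ 0`), whence
`c(n) ^ (α + 1) / (α + 1) ≤ S(n) ≤ c(n) n ^ α` for `α ≥ 0`, and the reverse inequalities for
`α ≤ 0`. As `α + 1 > 0`, each of these bounds is `o(n ^ (α + 1))` exactly when `c(n) = o(n)`.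
-/

open Asymptotics Filter Finset

theorem Finset.sum_Icc_card_le_sum_of_monotoneOn {M : Type*} [AddCommMonoid M] [PartialOrder M]
    [IsOrderedAddMonoid M] {f : ℕ → M} (hf : MonotoneOn f (Set.Ici 1)) {s : Finset ℕ}
    (hs : ∀ b ∈ s, 1 ≤ b) : ∑ i ∈ Icc 1 #s, f i ≤ ∑ b ∈ s, f b := by
  induction s using Finset.induction_on_max with
  | empty => simp
  | insert a s hlt ih =>
    have ha : a ∉ s := fun h => lt_irrefl a (hlt a h)
    have hcard : #s + 1 ≤ a := by
      have hsub := card_le_card fun b hb => mem_Ico.2 ⟨hs b (mem_insert_of_mem hb), hlt b hb⟩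
      have ha1 := hs a (mem_insert_self a s)
      rw [Nat.card_Ico] at hsub
      omega
    rw [card_insert_of_notMem ha, sum_Icc_succ_top (by omega), sum_insert ha, add_comm (f a)]
    exact add_le_add (ih fun b hb => hs b (mem_insert_of_mem hb))
      (hf (Set.mem_Ici.2 (Nat.le_add_left 1 _)) (Set.mem_Ici.2 (by omega)) hcard)

theorem Finset.sum_le_sum_Icc_card_of_antitoneOn {M : Type*} [AddCommGroup M] [PartialOrder M]
    [IsOrderedAddMonoid M] {f : ℕ → M} (hf : AntitoneOn f (Set.Ici 1)) {s : Finset ℕ}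
    (hs : ∀ b ∈ s, 1 ≤ b) : ∑ b ∈ s, f b ≤ ∑ i ∈ Icc 1 #s, f i := by
  simpa only [sum_neg_distrib, neg_le_neg_iff] using sum_Icc_card_le_sum_of_monotoneOn hf.neg hs

theorem sum_Icc_rpow_eq_sum_range (α : ℝ) (n : ℕ) :
    ∑ i ∈ Icc 1 n, (i : ℝ) ^ α = ∑ i ∈ range n, ((i : ℝ) + 1) ^ α := by
  rw [← Finset.Ico_add_one_right_eq_Icc, sum_Ico_eq_sum_range, Nat.add_sub_cancel]
  push_cast
  simp only [add_comm]

theorem rpow_add_one_div_le_sum_Icc_rpow {α : ℝ} (hα : 0 ≤ α) (n : ℕ) :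
    (n : ℝ) ^ (α + 1) / (α + 1) ≤ ∑ i ∈ Icc 1 n, (i : ℝ) ^ α := by
  have hmono : MonotoneOn (fun x : ℝ => x ^ α) (Set.Icc 0 (0 + n)) :=
    (Real.monotoneOn_rpow_Ici_of_exponent_nonneg hα).mono Set.Icc_subset_Ici_self
  have h := hmono.integral_le_sum
  rw [zero_add, integral_rpow (Or.inl (by linarith)), Real.zero_rpow (by linarith), sub_zero] at h
  simpa [sum_Icc_rpow_eq_sum_range] using h

/- The integral comparison starts at `1`: `x ^ α` is not antitone on `[0, 1]`, as `0 ^ α = 0`. -/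
theorem sum_Icc_rpow_le_rpow_add_one_div {α : ℝ} (hα : -1 < α) (hα0 : α ≤ 0) (n : ℕ) :
    ∑ i ∈ Icc 1 n, (i : ℝ) ^ α ≤ (n : ℝ) ^ (α + 1) / (α + 1) := by
  have hα1 : 0 < α + 1 := by linarith
  obtain _ | m := n
  · simp [Real.zero_rpow hα1.ne']
  have hanti : AntitoneOn (fun x : ℝ => x ^ α) (Set.Icc 1 (1 + m)) :=
    (Real.antitoneOn_rpow_Ioi_of_exponent_nonpos hα0).mono fun _ hx => one_pos.trans_le hx.1
  have h := hanti.sum_le_integral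
  rw [integral_rpow (Or.inl hα), Real.one_rpow] at h
  rw [sum_Icc_rpow_eq_sum_range, sum_range_succ']
  push_cast at h ⊢
  rw [le_div_iff₀ hα1] at h ⊢
  ring_nf at h ⊢
  rw [Real.one_rpow]
  linarith

theorem sum_rpow_le_card_mul_rpow {α : ℝ} (hα : 0 ≤ α) {s : Finset ℕ} {n : ℕ}
    (hs : ∀ i ∈ s, i ≤ n) : ∑ i ∈ s, (i : ℝ) ^ α ≤ #s * (n : ℝ) ^ α := by
  rw [← nsmul_eq_mul]
  exact sum_le_card_nsmul _ _ _ fun i hi =>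
    Real.rpow_le_rpow (Nat.cast_nonneg i) (Nat.cast_le.2 (hs i hi)) hα

theorem card_mul_rpow_le_sum_rpow {α : ℝ} (hα : α ≤ 0) {s : Finset ℕ} {n : ℕ}
    (hs : ∀ i ∈ s, 1 ≤ i ∧ i ≤ n) : #s * (n : ℝ) ^ α ≤ ∑ i ∈ s, (i : ℝ) ^ α := by
  rw [← nsmul_eq_mul]
  exact card_nsmul_le_sum _ _ _ fun i hi => Real.rpow_le_rpow_of_nonpos
    (Nat.cast_pos.2 (hs i hi).1) (Nat.cast_le.2 (hs i hi).2) hα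

theorem Asymptotics.isBigO_of_le_const_mul {ι : Type*} {l : Filter ι} {f g : ι → ℝ} (c : ℝ)
    (hf : ∀ x, 0 ≤ f x) (h : ∀ x, f x ≤ c * g x) : f =O[l] g :=
  (IsBigO.of_norm_le fun x => (Real.norm_of_nonneg (hf x)).trans_le (h x)).trans
    (isBigO_const_mul_self c g l)

theorem isTheta_sum_Icc_rpow {α : ℝ} (hα : -1 < α) :
    (fun n : ℕ => ∑ i ∈ Icc 1 n, (i : ℝ) ^ α) =Θ[atTop] fun n => (n : ℝ) ^ (α + 1) := by
  have hα1 : 0 < α + 1 := by linarith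
  have hsum_nonneg (n : ℕ) : 0 ≤ ∑ i ∈ Icc 1 n, (i : ℝ) ^ α := by positivity
  have hpow_nonneg (n : ℕ) : 0 ≤ (n : ℝ) ^ (α + 1) := by positivity
  have hcard (n : ℕ) : (#(Icc 1 n) : ℝ) * (n : ℝ) ^ α = (n : ℝ) ^ (α + 1) := by
    rw [Nat.card_Icc, Nat.add_sub_cancel, Real.rpow_add_one' (Nat.cast_nonneg n) hα1.ne', mul_comm]
  rcases le_total 0 α with hα0 | hα0
  · refine ⟨isBigO_of_le_const_mul 1 hsum_nonneg fun n => ?_,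
      isBigO_of_le_const_mul (α + 1) hpow_nonneg fun n => ?_⟩
    · rw [one_mul, ← hcard]
      exact sum_rpow_le_card_mul_rpow hα0 fun i hi => (mem_Icc.1 hi).2
    · rw [← div_le_iff₀' hα1]
      exact rpow_add_one_div_le_sum_Icc_rpow hα0 n
  · refine ⟨isBigO_of_le_const_mul (α + 1)⁻¹ hsum_nonneg fun n => ?_,
      isBigO_of_le_const_mul 1 hpow_nonneg fun n => ?_⟩
    · rw [inv_mul_eq_div]
      exact sum_Icc_rpow_le_rpow_add_one_div hα hα0 n
    · rw [one_mul, ← hcard]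
      exact card_mul_rpow_le_sum_rpow hα0 fun i hi => mem_Icc.1 hi

theorem Asymptotics.IsLittleO.of_rpow {ι : Type*} {l : Filter ι} {f g : ι → ℝ} {r : ℝ}
    (hr : 0 < r) (hf : 0 ≤ᶠ[l] f) (hg : 0 ≤ᶠ[l] g)
    (h : (fun x => f x ^ r) =o[l] fun x => g x ^ r) : f =o[l] g := by
  refine (h.rpow (inv_pos.2 hr) (hg.mono fun x hx => Real.rpow_nonneg hx r)).congr' ?_ ?_
  · filter_upwards [hf] with x hx using Real.rpow_rpow_inv hx hr.ne'
  · filter_upwards [hg] with x hx using Real.rpow_rpow_inv hx hr.ne'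

section PowerWeightedCount

variable {α : ℝ} {s : ℕ → Finset ℕ}

theorem isLittleO_sum_rpow_of_card (hα : -1 < α) (hs : ∀ n, s n ⊆ Icc 1 n)
    (h : (fun n => (#(s n) : ℝ)) =o[atTop] fun n => (n : ℝ)) :
    (fun n => ∑ i ∈ s n, (i : ℝ) ^ α) =o[atTop] fun n => (n : ℝ) ^ (α + 1) := by
  have hα1 : 0 < α + 1 := by linarith
  have hsum_nonneg (n : ℕ) : 0 ≤ ∑ i ∈ s n, (i : ℝ) ^ α := by positivity
  rcases le_total 0 α with hα0 | hα0
  · have hle : (fun n => ∑ i ∈ s n, (i : ℝ) ^ α) =O[atTop] fun n => (#(s n) : ℝ) * (n : ℝ) ^ α :=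
      isBigO_of_le_const_mul 1 hsum_nonneg fun n => by
        rw [one_mul]
        exact sum_rpow_le_card_mul_rpow hα0 fun i hi => (mem_Icc.1 (hs n hi)).2
    refine hle.trans_isLittleO ((h.mul_isBigO (isBigO_refl _ _)).congr_right fun n => ?_)
    rw [Real.rpow_add_one' (Nat.cast_nonneg n) hα1.ne', mul_comm]
  · have hle : (fun n => ∑ i ∈ s n, (i : ℝ) ^ α) =O[atTop] fun n => (#(s n) : ℝ) ^ (α + 1) :=
      isBigO_of_le_const_mul (α + 1)⁻¹ hsum_nonneg fun n => by
        rw [inv_mul_eq_div]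
        refine (sum_le_sum_Icc_card_of_antitoneOn ?_ fun i hi => (mem_Icc.1 (hs n hi)).1).trans
          (sum_Icc_rpow_le_rpow_add_one_div hα hα0 _)
        exact fun i hi j _ hij => Real.rpow_le_rpow_of_nonpos (Nat.cast_pos.2 hi)
          (Nat.cast_le.2 hij) hα0
    exact hle.trans_isLittleO (h.rpow hα1 (Eventually.of_forall fun n => Nat.cast_nonneg n))

theorem isLittleO_card_of_sum_rpow (hα : -1 < α) (hs : ∀ n, s n ⊆ Icc 1 n)
    (h : (fun n => ∑ i ∈ s n, (i : ℝ) ^ α) =o[atTop] fun n => (n : ℝ) ^ (α + 1)) :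
    (fun n => (#(s n) : ℝ)) =o[atTop] fun n => (n : ℝ) := by
  rcases le_total 0 α with hα0 | hα0
  · have hα1 : 0 < α + 1 := by linarith
    have hle : (fun n => (#(s n) : ℝ) ^ (α + 1)) =O[atTop] fun n => ∑ i ∈ s n, (i : ℝ) ^ α :=
      isBigO_of_le_const_mul (α + 1) (fun n => by positivity) fun n => by
        rw [← div_le_iff₀' hα1]
        refine (rpow_add_one_div_le_sum_Icc_rpow hα0 _).trans
          (sum_Icc_card_le_sum_of_monotoneOn ?_ fun i hi => (mem_Icc.1 (hs n hi)).1)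
        exact fun i _ j _ hij => Real.rpow_le_rpow (Nat.cast_nonneg i) (Nat.cast_le.2 hij) hα0
    exact (hle.trans_isLittleO h).of_rpow hα1 (.of_forall fun n => Nat.cast_nonneg _)
      (.of_forall fun n => Nat.cast_nonneg n)
  · have hle : (fun n => (#(s n) : ℝ) * (n : ℝ) ^ α) =O[atTop] fun n => ∑ i ∈ s n, (i : ℝ) ^ α :=
      isBigO_of_le_const_mul 1 (fun n => by positivity) fun n => by
        rw [one_mul]
        exact card_mul_rpow_le_sum_rpow hα0 fun i hi => mem_Icc.1 (hs n hi)
    have hmul := (hle.trans_isLittleO h).mul_isBigO (isBigO_refl (fun n : ℕ => (n : ℝ) ^ (-α)) atTop)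
    refine hmul.congr' ?_ ?_ <;> filter_upwards [eventually_gt_atTop 0] with n hn
    · rw [mul_assoc, ← Real.rpow_add (Nat.cast_pos.2 hn), add_neg_cancel, Real.rpow_zero, mul_one]
    · rw [← Real.rpow_add (Nat.cast_pos.2 hn), add_neg_cancel_comm, Real.rpow_one]

theorem isLittleO_sum_rpow_iff_card (hα : -1 < α) (hs : ∀ n, s n ⊆ Icc 1 n) :
    (fun n => ∑ i ∈ s n, (i : ℝ) ^ α) =o[atTop] (fun n => (n : ℝ) ^ (α + 1)) ↔
      (fun n => (#(s n) : ℝ)) =o[atTop] fun n => (n : ℝ) :=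
  ⟨isLittleO_card_of_sum_rpow hα hs, isLittleO_sum_rpow_of_card hα hs⟩

end PowerWeightedCount

open scoped Classical in
theorem mem_Ialpha_iff {α : ℝ} (hα : -1 < α) {A : Set ℕ} :
    A ∈ Ialpha α ↔
      (fun n => ∑ i ∈ Icc 1 n with i ∈ A, (i : ℝ) ^ α) =o[atTop] fun n => (n : ℝ) ^ (α + 1) := by
  rw [← (isTheta_sum_Icc_rpow hα).isLittleO_congr_right]
  simp only [Ialpha, Set.mem_ofPred_eq, sum_filter]

/-- For every real `α > -1`, the ideal `I_α` coincides with the ideal `I_0`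
of natural density zero sets. -/
theorem Ialpha_eq_Izero (α : ℝ) (hα : -1 < α) : Ialpha α = Ialpha 0 := by
  classical
  ext A
  have hs (n : ℕ) : {i ∈ Finset.Icc 1 n | i ∈ A} ⊆ Finset.Icc 1 n := filter_subset _ _
  rw [mem_Ialpha_iff hα, mem_Ialpha_iff neg_one_lt_zero, isLittleO_sum_rpow_iff_card hα hs,
    isLittleO_sum_rpow_iff_card neg_one_lt_zero hs]
end

section
/- Let x be a sequence in a first countable topological space X and let I be an ideal on ℕ which is F_σ-separated from its dual filter. Then for every ordinary limit point ℓ of x, the set {ω ∈ (0,1] : ℓ is an I-cluster point of the subsequence x↾ω} is comeager in (0,1]. -/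
open Filter Topology Set MeasureTheory
open scoped ENNReal

/-!
If `l` is not an `I`-cluster point of `x↾ω`, then for some member `U m` of a countable
neighbourhood basis at `l` the hit set `{n | (x↾ω) n ∈ U m}` lies in `I`, so its indicator lies
in one of the closed sets `F j` whose union separates `I` from `I*`. It is therefore enough that
each `{ω | χ {n | (x↾ω) n ∈ U m} ∈ F j}` is nowhere dense. Inside any dyadic interval, keep its
prefix of digits and continue with a digit `1` exactly at the indices `i` with `x i ∈ U m`
(infinitely many, as `l` is a limit point of `x`). For the resulting `ω₁` the hit set is
cofinite, so its indicator lies in `I*`, hence outside the closed set `F j` together with a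
whole cylinder; every `ω` in a small enough dyadic interval next to `ω₁` shares so many digits
with `ω₁` that its indicator falls in that cylinder.
-/

lemma dyadicDigit_eq_zero_or_one (ω : ℝ) (i : ℕ) : dyadicDigit ω i = 0 ∨ dyadicDigit ω i = 1 := by
  have hle : ⌈(2 : ℝ) ^ (i + 1) * ω⌉ ≤ 2 * ⌈(2 : ℝ) ^ i * ω⌉ := by
    rw [Int.ceil_le, pow_succ', mul_assoc]; push_cast
    linarith [Int.le_ceil ((2 : ℝ) ^ i * ω)]
  have hlt : 2 * ⌈(2 : ℝ) ^ i * ω⌉ - 2 < ⌈(2 : ℝ) ^ (i + 1) * ω⌉ := by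
    rw [Int.lt_ceil, pow_succ', mul_assoc]; push_cast
    linarith [Int.ceil_lt_add_one ((2 : ℝ) ^ i * ω)]
  unfold dyadicDigit; omega

lemma ceil_two_pow_mul_eq_iff {ω ω' : ℝ} {M : ℕ} :
    ⌈(2 : ℝ) ^ M * ω⌉ = ⌈(2 : ℝ) ^ M * ω'⌉ ↔
      ⌈ω⌉ = ⌈ω'⌉ ∧ ∀ i < M, dyadicDigit ω i = dyadicDigit ω' i := by
  induction M with
  | zero => simp
  | succ M ih =>
    have d := dyadicDigit_eq_zero_or_one ω M
    have d' := dyadicDigit_eq_zero_or_one ω' M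
    simp only [Nat.forall_lt_succ_right, ← and_assoc, ← ih]
    unfold dyadicDigit at *
    omega

lemma dist_lt_of_ceil_two_pow_mul_eq {ω ω' : ℝ} {M : ℕ}
    (h : ⌈(2 : ℝ) ^ M * ω⌉ = ⌈(2 : ℝ) ^ M * ω'⌉) : dist ω ω' < 2⁻¹ ^ M := by
  have h1 := Int.le_ceil ((2 : ℝ) ^ M * ω)
  have h2 := Int.ceil_lt_add_one ((2 : ℝ) ^ M * ω)
  have h1' := Int.le_ceil ((2 : ℝ) ^ M * ω')
  have h2' := Int.ceil_lt_add_one ((2 : ℝ) ^ M * ω')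
  rw [h] at h1 h2
  have hpos : (0 : ℝ) < 2 ^ M := by positivity
  rw [Real.dist_eq, inv_pow, ← one_div, lt_div_iff₀ hpos]
  calc |ω - ω'| * 2 ^ M = |2 ^ M * ω - 2 ^ M * ω'| := by
        rw [← mul_sub, abs_mul, abs_of_pos hpos, mul_comm]
    _ < 1 := abs_lt.2 ⟨by linarith, by linarith⟩

lemma dist_lt_of_forall_dyadicDigit_eq {ω ω' : ℝ} (hω : ω ∈ Ioc (0 : ℝ) 1)
    (hω' : ω' ∈ Ioc (0 : ℝ) 1) {M : ℕ} (h : ∀ i < M, dyadicDigit ω i = dyadicDigit ω' i) :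
    dist ω ω' < 2⁻¹ ^ M := by
  have hceil : ∀ y ∈ Ioc (0 : ℝ) 1, ⌈y⌉ = 1 := fun y hy => by
    rw [Int.ceil_eq_iff]; norm_num; exact hy
  exact dist_lt_of_ceil_two_pow_mul_eq
    (ceil_two_pow_mul_eq_iff.2 ⟨(hceil ω hω).trans (hceil ω' hω').symm, h⟩)

lemma infinite_setOf_dyadicDigit_eq_one (ω : ℝ) : {i | dyadicDigit ω i = 1}.Infinite := by
  set g : ℕ → ℝ := fun j => 2 ^ j * ω - ⌈(2 : ℝ) ^ j * ω⌉ + 1 with hg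
  have hg_pos : ∀ j, 0 < g j := fun j => by linarith [Int.ceil_lt_add_one ((2 : ℝ) ^ j * ω)]
  have hg_le : ∀ j, g j ≤ 1 := fun j => by linarith [Int.le_ceil ((2 : ℝ) ^ j * ω)]
  -- a digit `0` at `j` means `g (j + 1) = 2 * g j`, which cannot go on forever in `(0, 1]`
  have hdigit : ∀ j, (dyadicDigit ω j : ℝ) = 2 * g j - g (j + 1) := fun j => by
    simp only [hg, dyadicDigit, pow_succ', mul_assoc]; push_cast; ring
  refine Set.infinite_of_forall_exists_gt fun a => ?_
  by_contra! hnone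
  have hdouble : ∀ k, g (a + 1 + k) = 2 ^ k * g (a + 1) := by
    intro k
    induction k with
    | zero => simp
    | succ k ih =>
      have h0 : dyadicDigit ω (a + 1 + k) = 0 :=
        (dyadicDigit_eq_zero_or_one ω _).resolve_right fun h1 => by
          have := hnone _ h1; omega
      have := hdigit (a + 1 + k)
      rw [h0, Int.cast_zero] at this
      rw [← add_assoc, pow_succ]; linarith
  obtain ⟨k, hk⟩ := pow_unbounded_of_one_lt (g (a + 1))⁻¹ one_lt_two
  have := hg_le (a + 1 + k)
  rw [hdouble] at this
  have := mul_lt_mul_of_pos_right hk (hg_pos (a + 1))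
  rw [inv_mul_cancel₀ (hg_pos _).ne'] at this
  linarith

namespace Real

lemma ofDigits_shift_eq_half (a : ℕ → Fin 2) (n : ℕ) :
    ofDigits (fun i => a (i + n)) = ((a n : ℕ) + ofDigits (fun i => a (i + (n + 1)))) / 2 := by
  rw [ofDigits_eq_sum_add_ofDigits _ 1]
  simp [ofDigitsTerm, add_assoc, add_comm 1 n]
  ring

lemma ofDigits_pos {b : ℕ} {a : ℕ → Fin b} {i : ℕ} (hi : (a i : ℕ) ≠ 0) : 0 < ofDigits a :=
  summable_ofDigitsTerm.tsum_pos (fun _ => ofDigitsTerm_nonneg) i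
    (by unfold ofDigitsTerm; have := Fin.pos (a i); positivity)

lemma ofDigits_shift_mem_Ioc {d : ℕ → Fin 2} (hd : {i | d i = 1}.Infinite) (n : ℕ) :
    ofDigits (fun i => d (i + n)) ∈ Ioc (0 : ℝ) 1 := by
  obtain ⟨i, hi, hni⟩ := hd.exists_gt n
  refine ⟨ofDigits_pos (i := i - n) ?_, ofDigits_le_one _⟩
  simp [Nat.sub_add_cancel hni.le, show d i = 1 from hi]

lemma ofDigits_mem_Ioc {d : ℕ → Fin 2} (hd : {i | d i = 1}.Infinite) :
    ofDigits d ∈ Ioc (0 : ℝ) 1 := by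
  simpa using ofDigits_shift_mem_Ioc hd 0

end Real

section DyadicDigitOfDigits

variable {d : ℕ → Fin 2} (hd : {i | d i = 1}.Infinite)
include hd

lemma ceil_two_pow_mul_ofDigits (n : ℕ) :
    (⌈(2 : ℝ) ^ n * Real.ofDigits d⌉ : ℝ) =
      2 ^ n * Real.ofDigits d - Real.ofDigits (fun i => d (i + n)) + 1 := by
  obtain ⟨k, hk⟩ :
      ∃ k : ℤ, (2 : ℝ) ^ n * Real.ofDigits d = k + Real.ofDigits (fun i => d (i + n)) := by
    induction n with
    | zero => exact ⟨0, by simp⟩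
    | succ n ih =>
      obtain ⟨k, hk⟩ := ih
      refine ⟨2 * k + (d n : ℕ), ?_⟩
      rw [pow_succ', mul_assoc, hk, Real.ofDigits_shift_eq_half]
      push_cast; ring
  have ht := Real.ofDigits_shift_mem_Ioc hd n
  rw [hk, show ⌈(k : ℝ) + Real.ofDigits (fun i => d (i + n))⌉ = k + 1 by
    rw [Int.ceil_eq_iff]; push_cast; constructor <;> linarith [ht.1, ht.2]]
  push_cast; ring

lemma dyadicDigit_ofDigits (n : ℕ) : dyadicDigit (Real.ofDigits d) n = (d n : ℕ) := by
  apply Int.cast_injective (α := ℝ)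
  have h := Real.ofDigits_shift_eq_half d n
  push_cast [dyadicDigit, ceil_two_pow_mul_ofDigits hd]
  rw [pow_succ', mul_assoc]
  linarith

end DyadicDigitOfDigits

lemma Nat.nth_eq_nth_of_forall_lt_iff {p q : ℕ → Prop} [DecidablePred p] {M n : ℕ}
    (h : ∀ i < M, p i ↔ q i) (hn : n < Nat.count p M) : Nat.nth q n = Nat.nth p n := by
  classical
  have hfin : ∀ hf : (Set.ofPred p).Finite, n < hf.toFinset.card :=
    fun hf => hn.trans_le (Nat.count_le_card hf M)
  have hlt : Nat.nth p n < M := Nat.nth_lt_of_lt_count hn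
  have hcount : Nat.count q (Nat.nth p n) = Nat.count p (Nat.nth p n) := by
    simp only [Nat.count_eq_card_filter_range]
    exact congrArg _
      (Finset.filter_congr fun i hi => (h i ((Finset.mem_range.1 hi).trans hlt)).symm)
  have := Nat.nth_count ((h _ hlt).1 (Nat.nth_mem n hfin))
  rwa [hcount, Nat.count_nth hfin] at this

lemma subseq_eq_of_dyadicDigit_eq {X : Type*} (x : ℕ → X) {ω y : ℝ} {M n : ℕ}
    (h : ∀ i < M, dyadicDigit y i = dyadicDigit ω i)
    (hn : n < Nat.count (fun i => dyadicDigit ω i = 1) M) : subseq x y n = subseq x ω n :=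
  congrArg x (Nat.nth_eq_nth_of_forall_lt_iff (fun i hi => by rw [h i hi]) hn)

lemma exists_isOpen_forall_dyadicDigit_eq {ω : ℝ} (hω : ω ∈ Ioc (0 : ℝ) 1) (M : ℕ) :
    ∃ V : Set (Ioc (0 : ℝ) 1), IsOpen V ∧ V.Nonempty ∧
      ∀ y ∈ V, ∀ i < M, dyadicDigit y i = dyadicDigit ω i := by
  set c := ⌈(2 : ℝ) ^ M * ω⌉
  have hpos : (0 : ℝ) < 2 ^ M := by positivity
  have hc : (c : ℝ) - 1 < 2 ^ M * ω := by linarith [Int.ceil_lt_add_one ((2 : ℝ) ^ M * ω)]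
  have hc₀ : (0 : ℝ) ≤ c - 1 := by
    have : (0 : ℤ) < c := Int.ceil_pos.2 (mul_pos hpos hω.1)
    have : (1 : ℝ) ≤ c := by exact_mod_cast this
    linarith
  -- `V` is the part left of `ω` of the dyadic interval `((c - 1) / 2 ^ M, c / 2 ^ M]` around `ω`
  have hlow : (c - 1) / 2 ^ M < ω := by rwa [div_lt_iff₀' hpos]
  refine ⟨Subtype.val ⁻¹' Ioo ((c - 1) / 2 ^ M) ω, isOpen_Ioo.preimage continuous_subtype_val,
    ?_, fun y hy => ?_⟩
  · obtain ⟨z, hz⟩ := nonempty_Ioo.2 hlow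
    exact ⟨⟨z, (div_nonneg hc₀ hpos.le).trans_lt hz.1, hz.2.le.trans hω.2⟩, hz⟩
  · have hceil : ⌈(2 : ℝ) ^ M * y⌉ = c := by
      rw [Int.ceil_eq_iff]
      rw [mem_preimage, mem_Ioo, div_lt_iff₀' hpos] at hy
      constructor
      · linarith [hy.1]
      · linarith [mul_lt_mul_of_pos_left hy.2 hpos, Int.le_ceil ((2 : ℝ) ^ M * ω)]
    exact (ceil_two_pow_mul_eq_iff.1 hceil).2

lemma exists_dyadicDigit_eq_compl_finite {X : Type*} (x : ℕ → X) {U : Set X}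
    (hU : {i | x i ∈ U}.Infinite) (ω₀ : ℝ) (M : ℕ) :
    ∃ ω ∈ Ioc (0 : ℝ) 1, (∀ i < M, dyadicDigit ω i = dyadicDigit ω₀ i) ∧
      {n | subseq x ω n ∈ U}ᶜ.Finite := by
  classical
  -- keep the first `M` digits of `ω₀`, then select exactly the indices `i` with `x i ∈ U`
  set P : ℕ → Prop := fun i => if i < M then dyadicDigit ω₀ i = 1 else x i ∈ U
  set d : ℕ → Fin 2 := fun i => if P i then 1 else 0
  have hd : {i | d i = 1}.Infinite :=
    (hU.sdiff (finite_Iio M)).mono fun i hi => by simp_all [d, P]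
  have hdigit : ∀ i, dyadicDigit (Real.ofDigits d) i = 1 ↔ P i := fun i => by
    rw [dyadicDigit_ofDigits hd]; by_cases h : P i <;> simp [d, h]
  refine ⟨Real.ofDigits d, Real.ofDigits_mem_Ioc hd, fun i hi => ?_, ?_⟩
  · have := hdigit i
    simp only [P, if_pos hi] at this
    have := dyadicDigit_eq_zero_or_one ω₀ i
    have := dyadicDigit_eq_zero_or_one (Real.ofDigits d) i
    omega
  · have hp := infinite_setOf_dyadicDigit_eq_one (Real.ofDigits d)
    refine (finite_Iio (Nat.count (fun i => dyadicDigit (Real.ofDigits d) i = 1) M)).subset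
      fun n hn => ?_
    by_contra! hMn
    have hle : M ≤ Nat.nth _ n := (Nat.count_le_iff_le_nth hp).1 (not_lt.1 hMn)
    have hmem := (hdigit _).1 (Nat.nth_mem_of_infinite hp n)
    simp only [P, if_neg (not_lt.2 hle)] at hmem
    exact hn hmem

lemma isNowhereDense_of_forall_exists_isOpen_subset {α : Type*} [TopologicalSpace α]
    {s : Set α} (h : ∀ W, IsOpen W → W.Nonempty → ∃ V ⊆ W, IsOpen V ∧ V.Nonempty ∧ Disjoint V s) :
    IsNowhereDense s := by
  rw [IsNowhereDense, interior_eq_empty_iff_dense_compl, dense_iff_inter_open]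
  intro W hW hne
  obtain ⟨V, hVW, hV, ⟨v, hv⟩, hVs⟩ := h W hW hne
  exact ⟨v, hVW hv, (hVs.closure_right hV).notMem_of_mem_left hv⟩

theorem isNowhereDense_setOf_chi_mem {X : Type*} (x : ℕ → X) {U : Set X}
    (hU : {i | x i ∈ U}.Infinite) {F : Set (ℕ → Bool)} (hF : IsClosed F)
    (hcof : ∀ S : Set ℕ, Sᶜ.Finite → chi S ∉ F) :
    IsNowhereDense {ω : Ioc (0 : ℝ) 1 | chi {n | subseq x ω n ∈ U} ∈ F} := by
  refine isNowhereDense_of_forall_exists_isOpen_subset fun W hW ⟨ω₀, hω₀⟩ => ?_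
  obtain ⟨ε, hε, hball⟩ := Metric.isOpen_iff.1 hW ω₀ hω₀
  obtain ⟨M₀, hM₀⟩ := exists_pow_lt_of_lt_one hε (by norm_num : (2⁻¹ : ℝ) < 1)
  obtain ⟨ω₁, hω₁, hω₁₀, hcofin⟩ := exists_dyadicDigit_eq_compl_finite x hU ω₀ M₀
  obtain ⟨-, ⟨z, N, rfl⟩, hz, hzF⟩ :=
    (PiNat.isTopologicalBasis_cylinders fun _ => Bool).exists_subset_of_mem_open
      (hcof _ hcofin) hF.isOpen_compl
  rw [PiNat.mem_cylinder_iff_eq] at hz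
  set p := fun i => dyadicDigit ω₁ i = 1
  set M := max M₀ (Nat.nth p N)
  have hNM : N ≤ Nat.count p M :=
    (Nat.count_nth_of_infinite (infinite_setOf_dyadicDigit_eq_one ω₁) N).symm.le.trans
      (Nat.count_monotone p (le_max_right _ _))
  obtain ⟨V, hV, hVne, hVdig⟩ := exists_isOpen_forall_dyadicDigit_eq hω₁ M
  refine ⟨V, fun y hy => hball ?_, hV, hVne, disjoint_left.2 fun y hy hyF => ?_⟩
  · exact (dist_lt_of_forall_dyadicDigit_eq y.2 ω₀.2
      fun i hi => (hVdig y hy i (lt_max_of_lt_left hi)).trans (hω₁₀ i hi)).trans hM₀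
  · refine hzF (hz ▸ PiNat.mem_cylinder_iff.2 fun n hn => ?_) hyF
    have := subseq_eq_of_dyadicDigit_eq x (hVdig y hy) (hn.trans_le hNM)
    simp [chi, this]

lemma infinite_setOf_mem_of_mem_limitPts {X : Type*} [TopologicalSpace X] {x : ℕ → X} {l : X}
    (hl : l ∈ limitPts x) {U : Set X} (hU : U ∈ 𝓝 l) : {i | x i ∈ U}.Infinite := by
  obtain ⟨k, hk, hkl⟩ := hl
  exact Nat.frequently_atTop_iff_infinite.1
    (hk.tendsto_atTop.frequently (hkl.eventually hU).frequently)

/-- If `I` is `F_σ`-separated from its dual filter, then for every ordinary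
limit point `l` of `x`, `{ω ∈ (0,1] : l is an I-cluster point of x↾ω}` is
comeager in `(0,1]`. -/
theorem clusterPt_subseq_comeager {X : Type*} [TopologicalSpace X]
    [FirstCountableTopology X]
    (x : ℕ → X) (I : Set (Set ℕ)) (hI : IsIdealOn I) (hsep : FsigmaSeparated I)
    (l : X) (hl : l ∈ limitPts x) :
    IsMeagre {ω : Set.Ioc (0:ℝ) 1 | ¬ IdealClusterPt I (subseq x ↑ω) l} := by
  obtain ⟨-, ⟨F, hF, rfl⟩, hIF, hFdual⟩ := hsep
  obtain ⟨U, hU⟩ := (𝓝 l).exists_antitone_basis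
  have hcof : ∀ j, ∀ S : Set ℕ, Sᶜ.Finite → chi S ∉ F j := fun j S hS hSF =>
    (eq_empty_iff_forall_notMem.1 hFdual) (chi S) ⟨mem_iUnion.2 ⟨j, hSF⟩, S, hI.2.2.1 _ hS, rfl⟩
  refine (isMeagre_iUnion fun m => isMeagre_iUnion fun j => (isNowhereDense_setOf_chi_mem x
    (infinite_setOf_mem_of_mem_limitPts hl (hU.mem m)) (hF j) (hcof j)).isMeagre).mono ?_
  intro ω hω
  simp only [IdealClusterPt, mem_ofPred_eq, not_forall, not_not] at hω
  obtain ⟨V, hV, hVI⟩ := hω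
  obtain ⟨m, hm⟩ := hU.mem_iff.1 hV
  have hSI : {n | subseq x ω n ∈ U m} ∈ I := hI.1 (fun n hn => hm hn) hVI
  obtain ⟨j, hj⟩ := mem_iUnion.1 (hIF ⟨_, hSI, rfl⟩)
  exact mem_iUnion₂.2 ⟨m, j, hj⟩
end

section
/- Let x be a sequence in a first countable space X, Z_μ a generalized density ideal given by partition (I_n) and submeasures (μ_n), and ℓ ∈ X with decreasing local base (U_m). Then ℓ is a Z_μ-limit point of the subsequence x↾ω if and only if there exists q > 0 such that for every m, limsup_n μ_n({k : (x↾ω)_k ∈ U_m} ∩ I_n) ≥ q. -/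
open Filter Topology Set MeasureTheory
open scoped ENNReal

/-!
Both sides say that `ℓ` is the limit of `y` along some set `A ∉ Z_μ`, i.e. that `A \ y⁻¹(U_m)` is
finite for every `m`. If so, finite sets being negligible for `limsup_n μ_n(· ∩ I_n)`, every
`V_m = y⁻¹(U_m)` has limsup at least that of `A`, which is positive. Conversely, pick `0 < r < q`
and blocks `n_m ≥ m` with `μ_{n_m}(V_m ∩ I_{n_m}) > r`; then `A = ⋃_m V_m ∩ I_{n_m}` is not in
`Z_μ`, and `A \ V_m` lies in the finitely many blocks `I_{n_{m'}}`, `m' < m`, as `(V_m)` decreases.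
-/

theorem Function.Injective.map_cofinite_eq {α β : Type*} {f : α → β}
    (hf : Function.Injective f) : map f cofinite = cofinite ⊓ 𝓟 (range f) := by
  rw [← map_comap, hf.comap_cofinite_eq]

theorem Filter.HasBasis.tendsto_cofinite_inf_principal_iff {α X ι : Type*} {f : Filter X}
    {p : ι → Prop} {U : ι → Set X} (hU : f.HasBasis p U) {y : α → X} {A : Set α} :
    Tendsto y (cofinite ⊓ 𝓟 A) f ↔ ∀ i, p i → (A \ y ⁻¹' U i).Finite := by
  simp only [hU.tendsto_right_iff, eventually_inf_principal, eventually_cofinite, Classical.not_imp]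
  rfl

theorem idealLimitPt_iff_exists_tendsto_cofinite_inf_principal {X : Type*} [TopologicalSpace X]
    {I : Set (Set ℕ)} (hI : ∀ A : Set ℕ, A.Finite → A ∈ I) {y : ℕ → X} {l : X} :
    IdealLimitPt I y l ↔ ∃ A ∉ I, Tendsto y (cofinite ⊓ 𝓟 A) (𝓝 l) := by
  constructor
  · rintro ⟨k, hk, hkl, hkI⟩
    refine ⟨range k, hkI, ?_⟩
    rwa [← hk.injective.map_cofinite_eq, tendsto_map'_iff, Nat.cofinite_eq_atTop]
  · rintro ⟨A, hAI, hAl⟩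
    have hA : A.Infinite := fun hfin => hAI (hI A hfin)
    have hrange : range (Nat.nth (· ∈ A)) = A := Nat.range_nth_of_infinite hA
    refine ⟨Nat.nth (· ∈ A), Nat.nth_strictMono hA, ?_, by rwa [hrange]⟩
    rwa [← Nat.cofinite_eq_atTop, ← tendsto_map'_iff,
      (Nat.nth_injective (p := (· ∈ A)) hA).map_cofinite_eq, hrange]

section Zmu

variable {P : ℕ → Set ℕ} {μ : ℕ → Set ℕ → ℝ≥0∞}

theorem mem_Zmu_iff_limsup_eq_zero {A : Set ℕ} :
    A ∈ Zmu P μ ↔ limsup (fun n => μ n (A ∩ P n)) atTop = 0 :=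
  ⟨Tendsto.limsup_eq, fun h => tendsto_of_le_liminf_of_limsup_le zero_le h.le⟩

theorem eventually_inter_eq_empty_of_finite (hdisj : Pairwise (Function.onFun Disjoint P))
    {F : Set ℕ} (hF : F.Finite) : ∀ᶠ n in atTop, F ∩ P n = ∅ := by
  have hout : ∀ j, ∀ᶠ n in atTop, j ∉ P n := by
    intro j
    rw [← Nat.cofinite_eq_atTop, eventually_cofinite]
    refine Set.Subsingleton.finite fun a ha b hb => hdisj.eq ?_
    exact not_disjoint_iff.2 ⟨j, not_not.1 ha, not_not.1 hb⟩
  filter_upwards [(eventually_all_finite hF).2 fun j _ => hout j] with n hn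
  exact eq_empty_of_forall_notMem fun j hj => hn j hj.1 hj.2

theorem finite_mem_Zmu (hdisj : Pairwise (Function.onFun Disjoint P)) (hempty : ∀ n, μ n ∅ = 0)
    {F : Set ℕ} (hF : F.Finite) : F ∈ Zmu P μ :=
  tendsto_const_nhds.congr' <| (eventually_inter_eq_empty_of_finite hdisj hF).mono
    fun n hn => by dsimp only; rw [hn, hempty]

theorem limsup_le_limsup_of_diff_finite (hdisj : Pairwise (Function.onFun Disjoint P))
    (hmono : ∀ n, Monotone (μ n)) {A B : Set ℕ} (hBA : (B \ A).Finite) :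
    limsup (fun n => μ n (B ∩ P n)) atTop ≤ limsup (fun n => μ n (A ∩ P n)) atTop := by
  refine limsup_le_limsup ((eventually_inter_eq_empty_of_finite hdisj hBA).mono fun n hn => ?_)
  refine hmono n fun j ⟨hjB, hjP⟩ => ⟨?_, hjP⟩
  by_contra hjA
  exact hn.subset ⟨⟨hjB, hjA⟩, hjP⟩

theorem exists_notMem_Zmu_forall_diff_finite (hfin : ∀ n, (P n).Finite)
    (hmono : ∀ n, Monotone (μ n)) {V : ℕ → Set ℕ} (hV : Antitone V) {q : ℝ≥0∞} (hq : 0 < q)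
    (hle : ∀ m, q ≤ limsup (fun n => μ n (V m ∩ P n)) atTop) :
    ∃ A ∉ Zmu P μ, ∀ m, (A \ V m).Finite := by
  obtain ⟨r, hr, hrq⟩ := exists_between hq
  have hfreq : ∀ m, ∃ᶠ n in atTop, r < μ n (V m ∩ P n) := fun m =>
    frequently_lt_of_lt_limsup (by isBoundedDefault) (hrq.trans_le (hle m))
  choose f hf_ge hf_gt using fun m => frequently_atTop.1 (hfreq m) m
  refine ⟨⋃ m, V m ∩ P (f m), fun hA => ?_, fun m => ?_⟩
  · obtain ⟨N, hN⟩ := eventually_atTop.1 (hA.eventually_lt_const hr)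
    refine (hN (f N) (hf_ge N)).not_ge ((hf_gt N).le.trans (hmono _ ?_))
    exact subset_inter (subset_iUnion (fun m => V m ∩ P (f m)) N) inter_subset_right
  · refine ((finite_lt_nat m).biUnion fun m' _ => hfin (f m')).subset ?_
    rintro j ⟨hjA, hjV⟩
    obtain ⟨m', hjV', hjP⟩ := mem_iUnion.1 hjA
    exact mem_biUnion (lt_of_not_ge fun h => hjV (hV h hjV')) hjP

theorem idealLimitPt_Zmu_iff {X : Type*} [TopologicalSpace X] (y : ℕ → X)
    (hP : IsFinPartition P) (hμ : ∀ n, IsSubmeasureOn (μ n)) {l : X} {U : ℕ → Set X}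
    (hU : (𝓝 l).HasBasis (fun _ : ℕ => True) U) (hUanti : Antitone U) :
    IdealLimitPt (Zmu P μ) y l ↔
      ∃ q : ℝ≥0∞, 0 < q ∧ ∀ m : ℕ, q ≤ limsup (fun n => μ n ({k | y k ∈ U m} ∩ P n)) atTop := by
  obtain ⟨hfin, -, hdisj⟩ := hP
  have hmono : ∀ n, Monotone (μ n) := fun n _ _ h => (hμ n).2.1 h
  simp only [idealLimitPt_iff_exists_tendsto_cofinite_inf_principal
    fun F => finite_mem_Zmu hdisj fun n => (hμ n).1, hU.tendsto_cofinite_inf_principal_iff,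
    forall_const]
  constructor
  · rintro ⟨A, hA, hAV⟩
    exact ⟨_, pos_iff_ne_zero.2 (mt mem_Zmu_iff_limsup_eq_zero.2 hA),
      fun m => limsup_le_limsup_of_diff_finite hdisj hmono (hAV m)⟩
  · rintro ⟨q, hq, hle⟩
    exact exists_notMem_Zmu_forall_diff_finite (fun n => (hfin n).1) hmono
      (fun _ _ h => preimage_mono (hUanti h)) hq hle

end Zmu

theorem idealLimitPt_iff_Vset_general {X : Type*} [TopologicalSpace X]
    (x : ℕ → X) (P : ℕ → Set ℕ) (μ : ℕ → Set ℕ → ℝ≥0∞)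
    (hP : IsFinPartition P) (hμ : ∀ n, IsSubmeasureOn (μ n))
    (l : X) (U : ℕ → Set X) (hU : (𝓝 l).HasBasis (fun _ : ℕ => True) U)
    (hUanti : Antitone U) (ω : ℝ) :
    IdealLimitPt (Zmu P μ) (subseq x ω) l ↔
      ∃ q : ℝ≥0∞, 0 < q ∧ ∀ m : ℕ,
        q ≤ Filter.limsup (fun n => μ n ({k | subseq x ω k ∈ U m} ∩ P n)) atTop :=
  idealLimitPt_Zmu_iff (subseq x ω) hP hμ hU hUanti

/-- `ℓ` is a `Z_μ`-limit point of `x↾ω` iff there is `q > 0` with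
`limsup_n μ_n({k : (x↾ω)_k ∈ U_m} ∩ I_n) ≥ q` for every `m`. -/
theorem idealLimitPt_iff_Vset {X : Type*} [TopologicalSpace X]
    [FirstCountableTopology X]
    (x : ℕ → X) (P : ℕ → Set ℕ) (μ : ℕ → Set ℕ → ℝ≥0∞)
    (hP : IsFinPartition P) (hμ : ∀ n, IsSubmeasureOn (μ n))
    (hconc : ∀ n A, μ n A = μ n (A ∩ P n))
    (hlimsup : 0 < Filter.limsup (fun n => μ n (P n)) atTop)
    (l : X) (U : ℕ → Set X) (hU : (𝓝 l).HasBasis (fun _ : ℕ => True) U)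
    (hUanti : Antitone U) (ω : ℝ) (hω : ω ∈ Set.Ioc (0:ℝ) 1) :
    IdealLimitPt (Zmu P μ) (subseq x ω) l ↔
      ∃ q : ℝ≥0∞, 0 < q ∧ ∀ m : ℕ,
        q ≤ Filter.limsup (fun n => μ n ({k | subseq x ω k ∈ U m} ∩ P n)) atTop :=
  idealLimitPt_iff_Vset_general x P μ hP hμ l U hU hUanti ω
end

section
/- The set of normal numbers Ω = {ω ∈ (0,1] : (1/n) ∑_{i≤n} d_i(ω) → 1/2}, where ∑ d_i(ω)2^{-i} is the non-terminating dyadic expansion of ω, is a meager subset of (0,1] of full Lebesgue measure. -/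
open Filter Topology Set MeasureTheory
open scoped ENNReal

/-!
Write `K n ω = ⌈2 ^ n * ω⌉ - 1` for the index of the dyadic cell of level `n` containing `ω`.
Then `K (n + 1) = 2 * K n + d n`, so each cell of level `n` splits into two cells of half its
length, one for each value of the digit `d n`. Under Lebesgue measure on `(0,1]` the digit `d n`
is therefore a fair coin independent of `K n`, hence of all earlier digits (they are functions of
`K n`), and the strong law of large numbers gives full measure. On the other hand, every open
interval contains an interval `(j / 2 ^ p - 2 ^ (-n), j / 2 ^ p)` on which the digits `p, …, n - 1`
all equal `1`; with `n` large this forces a digit mean above `3 / 4`, so the numbers whose digit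
means eventually stay below `3 / 4` lie outside a dense `G_δ`.
-/

open ProbabilityTheory

lemma Int.ceil_two_mul_sub_one_ediv_two (y : ℝ) : (⌈2 * y⌉ - 1) / 2 = ⌈y⌉ - 1 := by
  have upper : ⌈2 * y⌉ ≤ 2 * ⌈y⌉ := Int.ceil_le.mpr (by push_cast; linarith [Int.le_ceil y])
  have lower : 2 * ⌈y⌉ - 2 < ⌈2 * y⌉ :=
    Int.lt_ceil.mpr (by push_cast; linarith [Int.ceil_lt_add_one y])
  omega

/-- `ω` lies in the dyadic cell `(k / 2 ^ n, (k + 1) / 2 ^ n]` for `k = dyadicIndex n ω`. -/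
noncomputable def dyadicIndex (n : ℕ) (ω : ℝ) : ℤ := ⌈(2 : ℝ) ^ n * ω⌉ - 1

lemma dyadicIndex_succ_ediv_two (n : ℕ) (ω : ℝ) :
    dyadicIndex (n + 1) ω / 2 = dyadicIndex n ω := by
  rw [dyadicIndex, pow_succ', mul_assoc]
  exact Int.ceil_two_mul_sub_one_ediv_two _

lemma dyadicIndex_succ (n : ℕ) (ω : ℝ) :
    dyadicIndex (n + 1) ω = 2 * dyadicIndex n ω + dyadicDigit ω n := by
  rw [dyadicIndex, dyadicIndex, dyadicDigit]
  ring

lemma dyadicDigit_eq_emod (n : ℕ) (ω : ℝ) : dyadicDigit ω n = dyadicIndex (n + 1) ω % 2 := by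
  have := dyadicIndex_succ_ediv_two n ω
  have := dyadicIndex_succ n ω
  omega

lemma dyadicDigit_eq_zero_or_eq_one (n : ℕ) (ω : ℝ) :
    dyadicDigit ω n = 0 ∨ dyadicDigit ω n = 1 := by
  rw [dyadicDigit_eq_emod]
  exact Int.emod_two_eq _

lemma dyadicIndex_add_ediv (n m : ℕ) (ω : ℝ) :
    dyadicIndex (n + m) ω / 2 ^ m = dyadicIndex n ω := by
  induction m with
  | zero => simp
  | succ m ih =>
    rw [← add_assoc, pow_succ', ← Int.ediv_ediv_of_nonneg (by norm_num),
      dyadicIndex_succ_ediv_two, ih]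

lemma dyadicDigit_eq_dyadicIndex_ediv_emod {i n : ℕ} (h : i < n) (ω : ℝ) :
    dyadicDigit ω i = dyadicIndex n ω / 2 ^ (n - 1 - i) % 2 := by
  obtain ⟨m, rfl⟩ := Nat.exists_eq_add_of_lt h
  rw [show i + m + 1 - 1 - i = m by omega, show i + m + 1 = i + 1 + m by ring,
    dyadicIndex_add_ediv, dyadicDigit_eq_emod]

lemma dyadicIndex_eq_iff {n : ℕ} {ω : ℝ} {k : ℤ} :
    dyadicIndex n ω = k ↔ ω ∈ Ioc (k / 2 ^ n : ℝ) ((k + 1) / 2 ^ n) := by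
  have h2n : (0 : ℝ) < 2 ^ n := by positivity
  rw [dyadicIndex, sub_eq_iff_eq_add, Int.ceil_eq_iff, mem_Ioc, div_lt_iff₀ h2n,
    le_div_iff₀ h2n]
  push_cast
  constructor <;> rintro ⟨h₁, h₂⟩ <;> constructor <;> linarith

lemma Ioc_zero_one_eq_dyadicIndex_preimage : Ioc (0 : ℝ) 1 = dyadicIndex 0 ⁻¹' {0} := by
  ext ω
  simp [dyadicIndex_eq_iff]

@[fun_prop]
lemma measurable_dyadicIndex (n : ℕ) : Measurable (dyadicIndex n) := by
  unfold dyadicIndex; fun_prop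

@[fun_prop]
lemma measurable_dyadicDigit (n : ℕ) : Measurable (dyadicDigit · n) := by
  unfold dyadicDigit; fun_prop

lemma volume_dyadicIndex_preimage (n : ℕ) (k : ℤ) :
    volume (dyadicIndex n ⁻¹' {k}) = (2 ^ n)⁻¹ := by
  have : dyadicIndex n ⁻¹' {k} = Ioc (k / 2 ^ n : ℝ) ((k + 1) / 2 ^ n) := by
    ext ω; exact dyadicIndex_eq_iff
  rw [this, Real.volume_Ioc, ← sub_div, add_sub_cancel_left, one_div,
    ENNReal.ofReal_inv_of_pos (by positivity), ENNReal.ofReal_pow zero_le_two]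
  norm_num

instance : IsProbabilityMeasure (volume.restrict (Ioc (0 : ℝ) 1)) := ⟨by simp⟩

lemma restrict_Ioc_dyadicIndex_preimage (n : ℕ) (k : ℤ) :
    volume.restrict (Ioc (0 : ℝ) 1) (dyadicIndex n ⁻¹' {k}) =
      if k / 2 ^ n = 0 then (2 ^ n)⁻¹ else 0 := by
  rw [Measure.restrict_apply (measurable_dyadicIndex n (measurableSet_singleton k)),
    Ioc_zero_one_eq_dyadicIndex_preimage]
  have index_zero : ∀ ω ∈ dyadicIndex n ⁻¹' {k}, dyadicIndex 0 ω = k / 2 ^ n := fun ω hω => by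
    rw [← hω, ← dyadicIndex_add_ediv 0 n ω, zero_add]
  split_ifs with hk
  · have : dyadicIndex n ⁻¹' {k} ⊆ dyadicIndex 0 ⁻¹' {0} := fun ω hω =>
      (index_zero ω hω).trans hk
    rw [inter_eq_left.mpr this, volume_dyadicIndex_preimage]
  · have : Disjoint (dyadicIndex n ⁻¹' {k}) (dyadicIndex 0 ⁻¹' {0}) :=
      disjoint_left.mpr fun ω hω h0 => hk ((index_zero ω hω).symm.trans h0)
    rw [this.inter_eq, measure_empty]

noncomputable def fairCoin : Measure ℤ := (2⁻¹ : ℝ≥0∞) • (Measure.dirac 0 + Measure.dirac 1)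

lemma fairCoin_singleton (b : ℤ) : fairCoin {b} = if b = 0 ∨ b = 1 then 2⁻¹ else 0 := by
  simp only [fairCoin, Measure.smul_apply, Measure.add_apply, Measure.dirac_apply,
    indicator_apply, mem_singleton_iff, Pi.one_apply, smul_eq_mul]
  split_ifs <;> first | omega | simp

lemma restrict_Ioc_dyadicIndex_preimage_inter_dyadicDigit_preimage (n : ℕ) (k b : ℤ) :
    volume.restrict (Ioc (0 : ℝ) 1) (dyadicIndex n ⁻¹' {k} ∩ (dyadicDigit · n) ⁻¹' {b}) =
      volume.restrict (Ioc (0 : ℝ) 1) (dyadicIndex n ⁻¹' {k}) * fairCoin {b} := by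
  rw [fairCoin_singleton]
  split_ifs with hb
  · have cell : dyadicIndex n ⁻¹' {k} ∩ (dyadicDigit · n) ⁻¹' {b} =
        dyadicIndex (n + 1) ⁻¹' {2 * k + b} := by
      ext ω
      simp only [mem_inter_iff, mem_preimage, mem_singleton_iff, dyadicIndex_succ]
      have := dyadicDigit_eq_zero_or_eq_one n ω
      omega
    have hdiv : (2 * k + b) / 2 ^ (n + 1) = k / 2 ^ n := by
      rw [pow_succ', ← Int.ediv_ediv_of_nonneg (by norm_num)]
      congr 1
      omega
    rw [cell, restrict_Ioc_dyadicIndex_preimage, restrict_Ioc_dyadicIndex_preimage, hdiv,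
      pow_succ', ENNReal.mul_inv (by simp) (by simp)]
    split_ifs <;> simp [mul_comm]
  · have : (dyadicDigit · n) ⁻¹' {b} = ∅ := by
      ext ω
      have := dyadicDigit_eq_zero_or_eq_one n ω
      simp only [mem_preimage, mem_singleton_iff, mem_empty_iff_false, iff_false]
      omega
    simp [this]

lemma map_restrict_Ioc_dyadicIndex_dyadicDigit (n : ℕ) :
    (volume.restrict (Ioc (0 : ℝ) 1)).map (fun ω => (dyadicIndex n ω, dyadicDigit ω n)) =
      ((volume.restrict (Ioc (0 : ℝ) 1)).map (dyadicIndex n)).prod fairCoin := by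
  refine Measure.ext_of_singleton fun ⟨k, b⟩ => ?_
  rw [← singleton_prod_singleton, Measure.map_apply (by fun_prop) (.of_discrete),
    Measure.prod_prod, Measure.map_apply (by fun_prop) (.of_discrete), mk_preimage_prod,
    restrict_Ioc_dyadicIndex_preimage_inter_dyadicDigit_preimage]

lemma map_restrict_Ioc_dyadicDigit (n : ℕ) :
    (volume.restrict (Ioc (0 : ℝ) 1)).map (dyadicDigit · n) = fairCoin := by
  have : (dyadicDigit · n) = Prod.snd ∘ fun ω => (dyadicIndex n ω, dyadicDigit ω n) := rfl
  rw [this, ← Measure.map_map measurable_snd (by fun_prop),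
    map_restrict_Ioc_dyadicIndex_dyadicDigit, Measure.map_snd_prod,
    Measure.map_apply (by fun_prop) MeasurableSet.univ, preimage_univ, measure_univ, one_smul]

lemma indepFun_dyadicIndex_dyadicDigit (n : ℕ) :
    dyadicIndex n ⟂ᵢ[volume.restrict (Ioc (0 : ℝ) 1)] (dyadicDigit · n) := by
  rw [indepFun_iff_map_prod_eq_prod_map_map (by fun_prop) (by fun_prop),
    map_restrict_Ioc_dyadicDigit, map_restrict_Ioc_dyadicIndex_dyadicDigit]

lemma indepFun_dyadicDigit {i j : ℕ} (hij : i ≠ j) :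
    (fun ω => (dyadicDigit ω i : ℝ)) ⟂ᵢ[volume.restrict (Ioc (0 : ℝ) 1)]
      (fun ω => (dyadicDigit ω j : ℝ)) := by
  wlog hlt : i < j generalizing i j
  · exact (this hij.symm (by omega)).symm
  have h := (indepFun_dyadicIndex_dyadicDigit j).comp
    (φ := fun k : ℤ => ((k / 2 ^ (j - 1 - i) % 2 : ℤ) : ℝ)) (ψ := fun b : ℤ => (b : ℝ))
    (by fun_prop) (by fun_prop)
  simpa only [Function.comp_def, ← dyadicDigit_eq_dyadicIndex_ediv_emod hlt] using h

lemma identDistrib_dyadicDigit (i : ℕ) :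
    IdentDistrib (fun ω => (dyadicDigit ω i : ℝ)) (fun ω => (dyadicDigit ω 0 : ℝ))
      (volume.restrict (Ioc (0 : ℝ) 1)) (volume.restrict (Ioc (0 : ℝ) 1)) :=
  IdentDistrib.comp
    ⟨by fun_prop, by fun_prop, by rw [map_restrict_Ioc_dyadicDigit, map_restrict_Ioc_dyadicDigit]⟩
    (u := fun b : ℤ => (b : ℝ)) (by fun_prop)

lemma integral_dyadicDigit (n : ℕ) :
    ∫ ω, (dyadicDigit ω n : ℝ) ∂volume.restrict (Ioc (0 : ℝ) 1) = 1 / 2 := by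
  rw [← integral_map (f := fun b : ℤ => (b : ℝ)) (by fun_prop) (by fun_prop),
    map_restrict_Ioc_dyadicDigit, fairCoin, integral_smul_measure,
    integral_add_measure (integrable_dirac (by simp)) (integrable_dirac (by simp)),
    integral_dirac, integral_dirac]
  norm_num

noncomputable def digitMean (ω : ℝ) (n : ℕ) : ℝ :=
  (∑ i ∈ Finset.range n, (dyadicDigit ω i : ℝ)) / n

theorem ae_tendsto_digitMean :
    ∀ᵐ ω ∂volume.restrict (Ioc (0 : ℝ) 1), Tendsto (digitMean ω) atTop (𝓝 (1 / 2)) := by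
  have integrable :
      Integrable (fun ω => (dyadicDigit ω 0 : ℝ)) (volume.restrict (Ioc (0 : ℝ) 1)) :=
    .of_bound (by fun_prop) 1 (.of_forall fun ω => by
      rcases dyadicDigit_eq_zero_or_eq_one 0 ω with h | h <;> simp [h])
  have slln := strong_law_ae_real _ integrable (fun _ _ => indepFun_dyadicDigit)
    identDistrib_dyadicDigit
  rw [integral_dyadicDigit] at slln
  exact slln

lemma ceil_two_pow_mul_eq_of_mem_Ioc {p m n : ℕ} (hpm : p ≤ m) (hmn : m ≤ n) {j : ℤ} {ω : ℝ}
    (hω : ω ∈ Ioc (j / 2 ^ p - 1 / 2 ^ n : ℝ) (j / 2 ^ p)) :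
    ⌈(2 : ℝ) ^ m * ω⌉ = j * 2 ^ (m - p) := by
  have hm : (2 : ℝ) ^ m = 2 ^ p * 2 ^ (m - p) := by rw [← pow_add]; congr 1; omega
  have scale_center : (2 : ℝ) ^ m * (j / 2 ^ p) = j * 2 ^ (m - p) := by rw [hm]; field_simp
  have scale_radius : (2 : ℝ) ^ m * (1 / 2 ^ n) ≤ 1 := by
    rw [mul_one_div, div_le_one (by positivity)]
    exact pow_le_pow_right₀ one_le_two hmn
  obtain ⟨hlo, hhi⟩ := hω
  rw [Int.ceil_eq_iff]
  push_cast
  constructor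
  · nlinarith [mul_lt_mul_of_pos_left hlo (show (0 : ℝ) < 2 ^ m by positivity)]
  · calc (2 : ℝ) ^ m * ω ≤ 2 ^ m * (j / 2 ^ p) := by gcongr
      _ = j * 2 ^ (m - p) := scale_center

lemma dyadicDigit_eq_one_of_mem_Ioc {p i n : ℕ} (hpi : p ≤ i) (hin : i < n) {j : ℤ} {ω : ℝ}
    (hω : ω ∈ Ioc (j / 2 ^ p - 1 / 2 ^ n : ℝ) (j / 2 ^ p)) : dyadicDigit ω i = 1 := by
  rw [dyadicDigit, ceil_two_pow_mul_eq_of_mem_Ioc hpi hin.le hω,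
    ceil_two_pow_mul_eq_of_mem_Ioc (by omega) hin hω, show i + 1 - p = i - p + 1 by omega, pow_succ]
  ring

lemma le_sum_range_dyadicDigit_of_mem_Ioc {p n : ℕ} (hpn : p ≤ n) {j : ℤ} {ω : ℝ}
    (hω : ω ∈ Ioc (j / 2 ^ p - 1 / 2 ^ n : ℝ) (j / 2 ^ p)) :
    (n - p : ℝ) ≤ ∑ i ∈ Finset.range n, (dyadicDigit ω i : ℝ) := by
  have ones : ∀ i ∈ Finset.Ico p n, (dyadicDigit ω i : ℝ) = 1 := fun i hi => by
    obtain ⟨hpi, hin⟩ := Finset.mem_Ico.mp hi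
    rw [dyadicDigit_eq_one_of_mem_Ioc hpi hin hω, Int.cast_one]
  have rest : 0 ≤ ∑ i ∈ Finset.range p, (dyadicDigit ω i : ℝ) := Finset.sum_nonneg fun i _ => by
    rcases dyadicDigit_eq_zero_or_eq_one i ω with h | h <;> simp [h]
  rw [← Finset.sum_range_add_sum_Ico _ hpn, Finset.sum_congr rfl ones]
  simp only [Finset.sum_const, Nat.card_Ico, nsmul_eq_mul, mul_one, Nat.cast_sub hpn]
  linarith

lemma exists_lt_digitMean_on_Ioc {c : ℝ} (hc : c < 1) (m p : ℕ) :
    ∃ n ≥ m, p ≤ n ∧ ∀ (j : ℤ), ∀ ω ∈ Ioc (j / 2 ^ p - 1 / 2 ^ n : ℝ) (j / 2 ^ p),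
      c < digitMean ω n := by
  have tendsto : Tendsto (fun n : ℕ => 1 - (p : ℝ) / n) atTop (𝓝 1) := by
    simpa using tendsto_const_nhds.sub (tendsto_const_div_atTop_nhds_zero_nat (p : ℝ))
  obtain ⟨n, hcn, hmn, hpn⟩ := ((tendsto.eventually (lt_mem_nhds hc)).and
    ((eventually_ge_atTop m).and (eventually_gt_atTop p))).exists
  refine ⟨n, hmn, hpn.le, fun j ω hω => ?_⟩
  have hn : (n : ℝ) ≠ 0 := Nat.cast_ne_zero.mpr (by omega)
  calc c < 1 - p / n := hcn
    _ = (n - p) / n := by field_simp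
    _ ≤ digitMean ω n := by
      unfold digitMean
      gcongr
      exact le_sum_range_dyadicDigit_of_mem_Ioc hpn.le hω

lemma dense_iUnion_interior_setOf_lt_digitMean {c : ℝ} (hc : c < 1) (m : ℕ) :
    Dense (⋃ n ≥ m, interior {ω | c < digitMean ω n}) := by
  refine Metric.dense_iff.mpr fun x r hr => ?_
  obtain ⟨p, hp⟩ := exists_pow_lt_of_lt_one hr (by norm_num : (1 / 2 : ℝ) < 1)
  rw [one_div_pow] at hp
  obtain ⟨n, hmn, hpn, hmean⟩ := exists_lt_digitMean_on_Ioc hc m p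
  set j := ⌈(2 : ℝ) ^ p * x⌉
  have h2p : (0 : ℝ) < 2 ^ p := by positivity
  have hxj : x ≤ j / 2 ^ p := by rw [le_div_iff₀ h2p, mul_comm]; exact Int.le_ceil _
  have hjx : j / 2 ^ p < x + 1 / 2 ^ p := by
    rw [div_lt_iff₀ h2p, add_mul, one_div_mul_cancel h2p.ne', mul_comm]
    exact Int.ceil_lt_add_one _
  have hδ : (0 : ℝ) < 1 / 2 ^ n := by positivity
  have hδp : (1 : ℝ) / 2 ^ n ≤ 1 / 2 ^ p := by gcongr; exact one_le_two
  have interval : Ioo (j / 2 ^ p - 1 / 2 ^ n : ℝ) (j / 2 ^ p) ⊆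
      interior {ω | c < digitMean ω n} :=
    interior_maximal (fun ω hω => hmean j ω (Ioo_subset_Ioc_self hω)) isOpen_Ioo
  refine ⟨j / 2 ^ p - 1 / 2 ^ n / 2, ?_, mem_iUnion₂.mpr ⟨n, hmn, interval ⟨?_, ?_⟩⟩⟩
  · rw [Metric.mem_ball, Real.dist_eq, abs_sub_lt_iff]
    constructor <;> linarith
  all_goals linarith

theorem isMeagre_setOf_eventually_digitMean_le {c : ℝ} (hc : c < 1) :
    IsMeagre {ω | ∀ᶠ n in atTop, digitMean ω n ≤ c} := by
  refine mem_of_superset ((countable_iInter_mem (l := residual ℝ)).mpr fun m =>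
    residual_of_dense_open (isOpen_biUnion fun n _ => isOpen_interior)
      (dense_iUnion_interior_setOf_lt_digitMean hc m)) fun ω hω hle => ?_
  obtain ⟨M, hM⟩ := eventually_atTop.mp hle
  obtain ⟨n, hn, hω'⟩ := mem_iUnion₂.mp (mem_iInter.mp hω M)
  exact (hM n hn).not_gt (interior_subset (s := {ω | c < digitMean ω n}) hω')

/-- The set of normal numbers in `(0,1]` is meager but has full Lebesgue measure. -/
theorem normal_numbers_meager_full_measure :
    IsMeagre {ω : ℝ | ω ∈ Set.Ioc (0:ℝ) 1 ∧
        Tendsto (fun n : ℕ => (∑ i ∈ Finset.range n, (dyadicDigit ω i : ℝ)) / n)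
          atTop (𝓝 (1/2))} ∧
    MeasureTheory.volume {ω : ℝ | ω ∈ Set.Ioc (0:ℝ) 1 ∧
        Tendsto (fun n : ℕ => (∑ i ∈ Finset.range n, (dyadicDigit ω i : ℝ)) / n)
          atTop (𝓝 (1/2))} = 1 := by
  change IsMeagre (Ioc 0 1 ∩ {ω | Tendsto (digitMean ω) atTop (𝓝 (1 / 2))}) ∧
    volume (Ioc 0 1 ∩ {ω | Tendsto (digitMean ω) atTop (𝓝 (1 / 2))}) = 1
  constructor
  · refine (isMeagre_setOf_eventually_digitMean_le (c := 3 / 4) (by norm_num)).mono ?_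
    rintro ω ⟨-, hω⟩
    exact (hω.eventually (gt_mem_nhds (by norm_num))).mono fun n => le_of_lt
  · rw [measure_inter_conull' ?_, Real.volume_Ioc, sub_zero, ENNReal.ofReal_one]
    rw [sdiff_eq_compl_inter, ← Measure.restrict_apply' measurableSet_Ioc]
    exact ae_tendsto_digitMean
end
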